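/- arXiv:1611.10157 — 5 statements merged into one kernel-verified Lean document; each statement's English description precedes it below -/
import Mathlib

section
/- Let p > 1 and ε > 0, and set C_ε = (1 − (1+ε)^{−1/(p−1)})^{1−p}. Then for all real numbers y and z one has |y+z|^p − |y|^p ≥ (1/(1+ε)) |z|^p − (1 + C_ε/(1+ε)) |y|^p. -/
/-! Put `a = |y + z|`, `b = |y|` and `λ = (1+ε)^(-1/(p-1))`, so that `λ^(1-p) = 1 + ε` and
`(1-λ)^(1-p) = C_ε`. Convexity of `x ↦ x^p` applied to `a + b = λ (a/λ) + (1-λ) (b/(1-λ))` gives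
`(a+b)^p ≤ (1+ε) a^p + C_ε b^p`, and `|z| ≤ a + b` turns this into the claim after dividing
by `1 + ε`. -/

open Real

lemma mul_div_rpow_eq_rpow_one_sub_mul {t a : ℝ} (p : ℝ) (ht : 0 < t) (ha : 0 ≤ a) :
    t * (a / t) ^ p = t ^ (1 - p) * a ^ p := by
  rw [div_rpow ha ht.le, rpow_sub ht, rpow_one]
  field_simp

lemma add_rpow_le_weighted_rpow {p t a b : ℝ} (hp : 1 ≤ p) (ht₀ : 0 < t) (ht₁ : t < 1)
    (ha : 0 ≤ a) (hb : 0 ≤ b) :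
    (a + b) ^ p ≤ t ^ (1 - p) * a ^ p + (1 - t) ^ (1 - p) * b ^ p := by
  have ht₁' : 0 < 1 - t := sub_pos.2 ht₁
  have hsplit : t * (a / t) + (1 - t) * (b / (1 - t)) = a + b := by field_simp
  have hconv := (convexOn_rpow hp).2 (Set.mem_Ici.2 (div_nonneg ha ht₀.le))
    (Set.mem_Ici.2 (div_nonneg hb ht₁'.le)) ht₀.le ht₁'.le (add_sub_cancel t 1)
  simp only [smul_eq_mul, hsplit] at hconv
  rwa [mul_div_rpow_eq_rpow_one_sub_mul p ht₀ ha, mul_div_rpow_eq_rpow_one_sub_mul p ht₁' hb]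
    at hconv

lemma rpow_neg_inv_sub_one_mem_Ioo {p c : ℝ} (hp : 1 < p) (hc : 1 < c) :
    c ^ (-(1 / (p - 1))) ∈ Set.Ioo 0 1 :=
  ⟨rpow_pos_of_pos (zero_lt_one.trans hc) _,
    rpow_lt_one_of_one_lt_of_neg hc (neg_neg_of_pos (one_div_pos.2 (sub_pos.2 hp)))⟩

lemma rpow_neg_inv_sub_one_rpow_one_sub {p c : ℝ} (hp : 1 < p) (hc : 0 ≤ c) :
    (c ^ (-(1 / (p - 1)))) ^ (1 - p) = c := by
  have hexp : -(1 / (p - 1)) * (1 - p) = 1 := by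
    field_simp [(sub_pos.2 hp).ne']
    ring
  rw [← rpow_mul hc, hexp, rpow_one]

/-- For `p > 1`, `ε > 0` and `C_ε = (1 - (1+ε)^(-1/(p-1)))^(1-p)`, one has
`|y+z|^p - |y|^p ≥ (1/(1+ε))|z|^p - (1 + C_ε/(1+ε))|y|^p` for all reals `y, z`. -/
theorem jump_term_power_lower_bound (p ε : ℝ) (hp : 1 < p) (hε : 0 < ε)
    (Cε : ℝ) (hCε : Cε = (1 - (1 + ε) ^ (-(1 / (p - 1)))) ^ (1 - p)) :
    ∀ y z : ℝ,
      |y + z| ^ p - |y| ^ p ≥ (1 / (1 + ε)) * |z| ^ p - (1 + Cε / (1 + ε)) * |y| ^ p := by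
  intro y z
  have hε' : 0 < 1 + ε := by linarith
  obtain ⟨ht₀, ht₁⟩ := rpow_neg_inv_sub_one_mem_Ioo hp (lt_add_of_pos_right 1 hε)
  have hz : |z| ≤ |y + z| + |y| := by
    simpa using abs_sub (y + z) y
  have hbound : |z| ^ p ≤ (1 + ε) * |y + z| ^ p + Cε * |y| ^ p :=
    calc |z| ^ p ≤ (|y + z| + |y|) ^ p := rpow_le_rpow (abs_nonneg z) hz (by linarith)
      _ ≤ _ := by
        have := add_rpow_le_weighted_rpow hp.le ht₀ ht₁ (abs_nonneg (y + z)) (abs_nonneg y)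
        rwa [rpow_neg_inv_sub_one_rpow_one_sub hp hε'.le, ← hCε] at this
  have hdiv : (1 / (1 + ε)) * |z| ^ p ≤ |y + z| ^ p + Cε / (1 + ε) * |y| ^ p :=
    calc (1 / (1 + ε)) * |z| ^ p ≤ (1 / (1 + ε)) * ((1 + ε) * |y + z| ^ p + Cε * |y| ^ p) := by
          gcongr
      _ = |y + z| ^ p + Cε / (1 + ε) * |y| ^ p := by field_simp
  linarith
end

section
/- Let A : ℝ → ℝ be nondecreasing, right-continuous and continuous, with Lebesgue–Stieltjes measure μ_A, let p > 1, β > 0, and let g : ℝ → [0,∞) be Borel measurable. Then for all real numbers t ≤ T: (∫_{(t,T]} g(s) μ_A(ds))^p ≤ ((p−1)/β)^{p−1} · exp(−β·A(t)) · ∫_{(t,T]} exp(β·A(s)) g(s)^p μ_A(ds). -/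
/-!
Write `g = (e^{βA/p} g) · e^{-βA/p}` and apply Hölder with exponents `p` and `p/(p-1)`: the
second factor becomes `(∫ e^{-βA/(p-1)} dA)^{p-1}`. Since `A` is continuous, it pushes `μ_A` on
`(t, T]` forward to Lebesgue measure on `(A t, A T]`, so that integral is at most
`∫_{A t}^∞ e^{-βy/(p-1)} dy = ((p-1)/β) e^{-βA(t)/(p-1)}`.
-/

open MeasureTheory Set Real
open scoped ENNReal

theorem lintegral_Ioi_exp_neg_mul {b : ℝ} (hb : 0 < b) (c : ℝ) :
    ∫⁻ x in Ioi c, ENNReal.ofReal (exp (-(b * x))) = ENNReal.ofReal (exp (-(b * c)) / b) := by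
  have hint : IntegrableOn (fun x => exp (-(b * x))) (Ioi c) := by
    simpa only [neg_mul] using exp_neg_integrableOn_Ioi c hb
  rw [← ofReal_integral_eq_lintegral_ofReal hint
    (Filter.Eventually.of_forall fun x => (exp_pos _).le)]
  simpa [neg_div, div_neg] using
    congrArg ENNReal.ofReal (integral_exp_mul_Ioi (neg_neg_of_pos hb) c)

namespace StieltjesFunction

variable (A : StieltjesFunction ℝ)

theorem exists_inter_preimage_Iic_eq_Ioc (hA : Continuous A) {t T x : ℝ} (htT : t ≤ T)
    (hx : x ∈ Icc (A t) (A T)) :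
    ∃ u, A u = x ∧ Ioc t T ∩ A ⁻¹' Iic x = Ioc t u := by
  set S := Icc t T ∩ A ⁻¹' {x}
  have hS : IsCompact S := isCompact_Icc.inter_right (isClosed_singleton.preimage hA)
  have hne : S.Nonempty := intermediate_value_Icc htT hA.continuousOn hx
  obtain ⟨⟨-, huT⟩, hAu⟩ := hS.sSup_mem hne
  refine ⟨sSup S, hAu, Set.ext fun s => ⟨fun ⟨⟨hts, hsT⟩, hAs⟩ => ⟨hts, ?_⟩,
    fun ⟨hts, hsu⟩ => ⟨⟨hts, hsu.trans huT⟩, (A.mono hsu).trans_eq hAu⟩⟩⟩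
  by_contra! hus
  have hAs' : A s = x := le_antisymm hAs (hAu.symm.trans_le (A.mono hus.le))
  exact (le_csSup hS.bddAbove ⟨⟨hts.le, hsT⟩, hAs'⟩).not_gt hus

theorem map_restrict_Ioc (hA : Continuous A) (t T : ℝ) :
    (A.measure.restrict (Ioc t T)).map A = volume.restrict (Ioc (A t) (A T)) := by
  have hAm : Measurable A := hA.measurable
  have : IsFiniteMeasure (A.measure.restrict (Ioc t T)) :=
    isFiniteMeasure_restrict.2 measure_Ioc_lt_top.ne
  refine Measure.ext_of_Iic _ _ fun x => ?_
  rw [Measure.map_apply hAm measurableSet_Iic, Measure.restrict_apply (hAm measurableSet_Iic),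
    Measure.restrict_apply measurableSet_Iic, inter_comm, inter_comm (Iic x)]
  rcases lt_or_ge T t with hTt | htT
  · simp [Ioc_eq_empty_of_le hTt.le, Ioc_eq_empty_of_le (A.mono hTt.le)]
  rcases lt_or_ge x (A t) with hxt | hxt
  · have hpre : Ioc t T ∩ A ⁻¹' Iic x = ∅ :=
      eq_empty_of_forall_notMem fun s ⟨⟨hts, _⟩, hAs⟩ =>
        (hxt.trans_le (A.mono hts.le)).not_ge hAs
    have himg : Ioc (A t) (A T) ∩ Iic x = ∅ :=
      eq_empty_of_forall_notMem fun y ⟨⟨hty, _⟩, hyx⟩ => (hxt.trans hty).not_ge hyx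
    rw [hpre, himg, measure_empty, measure_empty]
  rcases le_or_gt (A T) x with hTx | hTx
  · have hpre : Ioc t T ∩ A ⁻¹' Iic x = Ioc t T :=
      inter_eq_left.2 fun s ⟨_, hsT⟩ => (A.mono hsT).trans hTx
    have himg : Ioc (A t) (A T) ∩ Iic x = Ioc (A t) (A T) :=
      inter_eq_left.2 fun y ⟨_, hyT⟩ => hyT.trans hTx
    rw [hpre, himg, A.measure_Ioc, Real.volume_Ioc]
  obtain ⟨u, hAu, hset⟩ := A.exists_inter_preimage_Iic_eq_Ioc hA htT ⟨hxt, hTx.le⟩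
  rw [hset, Ioc_inter_Iic, min_eq_right hTx.le, A.measure_Ioc, Real.volume_Ioc, hAu]

theorem lintegral_comp_restrict_Ioc (hA : Continuous A) (t T : ℝ) {h : ℝ → ℝ≥0∞}
    (hh : Measurable h) :
    ∫⁻ s in Ioc t T, h (A s) ∂A.measure = ∫⁻ y in Ioc (A t) (A T), h y := by
  rw [← A.map_restrict_Ioc hA, lintegral_map hh hA.measurable]

theorem lintegral_exp_neg_mul_le (hA : Continuous A) (t T : ℝ) {b : ℝ} (hb : 0 < b) :
    ∫⁻ s in Ioc t T, ENNReal.ofReal (exp (-(b * A s))) ∂A.measure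
      ≤ ENNReal.ofReal (exp (-(b * A t)) / b) :=
  calc _ = ∫⁻ y in Ioc (A t) (A T), ENNReal.ofReal (exp (-(b * y))) :=
        A.lintegral_comp_restrict_Ioc hA t T (by fun_prop)
    _ ≤ ∫⁻ y in Ioi (A t), ENNReal.ofReal (exp (-(b * y))) :=
        lintegral_mono_set Ioc_subset_Ioi_self
    _ = ENNReal.ofReal (exp (-(b * A t)) / b) := lintegral_Ioi_exp_neg_mul hb (A t)

end StieltjesFunction

theorem lintegral_rpow_le_lintegral_exp_mul_rpow {α : Type*} [MeasurableSpace α] (μ : Measure α)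
    {p : ℝ} (hp : 1 < p) {φ : α → ℝ} (hφ : Measurable φ) {f : α → ℝ≥0∞}
    (hf : AEMeasurable f μ) :
    (∫⁻ a, f a ∂μ) ^ p ≤ (∫⁻ a, ENNReal.ofReal (exp (φ a)) * f a ^ p ∂μ) *
      (∫⁻ a, ENNReal.ofReal (exp (-(φ a / (p - 1)))) ∂μ) ^ (p - 1) := by
  have hp0 : 0 < p := by linarith
  have hp1 : 0 < p - 1 := by linarith
  have hpq : p.HolderConjugate (p / (p - 1)) := .conjExponent hp
  set w : α → ℝ≥0∞ := fun a => ENNReal.ofReal (exp (φ a / p))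
  set v : α → ℝ≥0∞ := fun a => ENNReal.ofReal (exp (-(φ a / p)))
  have hwv : ∀ a, w a * f a * v a = f a := fun a => by
    rw [mul_right_comm, ← ENNReal.ofReal_mul (exp_pos _).le, ← exp_add, add_neg_cancel,
      exp_zero, ENNReal.ofReal_one, one_mul]
  have hw : ∀ a, (w a * f a) ^ p = ENNReal.ofReal (exp (φ a)) * f a ^ p := fun a => by
    rw [ENNReal.mul_rpow_of_nonneg _ _ hp0.le, ENNReal.ofReal_rpow_of_nonneg (exp_pos _).le hp0.le,
      ← exp_mul, div_mul_cancel₀ _ hp0.ne']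
  have hv : ∀ a, v a ^ (p / (p - 1)) = ENNReal.ofReal (exp (-(φ a / (p - 1)))) := fun a => by
    rw [ENNReal.ofReal_rpow_of_nonneg (exp_pos _).le (by positivity), ← exp_mul]
    congr 2
    field_simp
  have holder := ENNReal.lintegral_mul_le_Lp_mul_Lq μ hpq
    ((by fun_prop : Measurable w).aemeasurable.mul hf) (by fun_prop : Measurable v).aemeasurable
  simp only [Pi.mul_apply, hwv, hw, hv] at holder
  calc (∫⁻ a, f a ∂μ) ^ p
      ≤ ((∫⁻ a, ENNReal.ofReal (exp (φ a)) * f a ^ p ∂μ) ^ (1 / p) *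
          (∫⁻ a, ENNReal.ofReal (exp (-(φ a / (p - 1)))) ∂μ) ^ (1 / (p / (p - 1)))) ^ p :=
        ENNReal.rpow_le_rpow holder hp0.le
    _ = _ := by
        rw [ENNReal.mul_rpow_of_nonneg _ _ hp0.le, ← ENNReal.rpow_mul, ← ENNReal.rpow_mul,
          one_div_mul_cancel hp0.ne', ENNReal.rpow_one]
        congr 2
        field_simp

/-- Weighted Hölder estimate: for a nondecreasing right-continuous and continuous
function `A : ℝ → ℝ` (bundled as a Stieltjes function) with Lebesgue–Stieltjes
measure `A.measure`, `p > 1`, `β > 0` and a Borel measurable `g : ℝ → [0,∞)`,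
for all `t ≤ T` one has
`(∫_{(t,T]} g dA)^p ≤ ((p-1)/β)^(p-1) · e^{-β A(t)} · ∫_{(t,T]} e^{β A(s)} g(s)^p dA(s)`. -/
theorem weighted_holder_stieltjes (A : StieltjesFunction ℝ) (hA : Continuous A)
    (p β : ℝ) (hp : 1 < p) (hβ : 0 < β)
    (g : ℝ → ℝ) (hg : ∀ s, 0 ≤ g s) (hgm : Measurable g) :
    ∀ t T : ℝ, t ≤ T →
      (∫⁻ s in Set.Ioc t T, ENNReal.ofReal (g s) ∂A.measure) ^ p
        ≤ ENNReal.ofReal (((p - 1) / β) ^ (p - 1) * Real.exp (-β * A t)) *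
            ∫⁻ s in Set.Ioc t T, ENNReal.ofReal (Real.exp (β * A s) * g s ^ p) ∂A.measure := by
  intro t T _
  have hp1 : 0 < p - 1 := by linarith
  have hweight :
      (∫⁻ s in Ioc t T, ENNReal.ofReal (exp (-(β * A s / (p - 1)))) ∂A.measure) ^ (p - 1) ≤
        ENNReal.ofReal (((p - 1) / β) ^ (p - 1) * exp (-β * A t)) := by
    have hb : 0 < β / (p - 1) := div_pos hβ hp1
    have hbound := A.lintegral_exp_neg_mul_le hA t T hb
    simp only [div_mul_eq_mul_div] at hbound
    calc _ ≤ ENNReal.ofReal (exp (-(β * A t / (p - 1))) / (β / (p - 1))) ^ (p - 1) := by gcongr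
      _ = _ := by
        rw [ENNReal.ofReal_rpow_of_nonneg (by positivity) hp1.le, div_rpow (exp_pos _).le hb.le,
          ← exp_mul, div_eq_mul_inv, ← inv_rpow hb.le, inv_div, mul_comm]
        congr 3
        field_simp
  have hgp : ∀ s, ENNReal.ofReal (exp (β * A s)) * ENNReal.ofReal (g s) ^ p
      = ENNReal.ofReal (exp (β * A s) * g s ^ p) := fun s => by
    rw [ENNReal.ofReal_rpow_of_nonneg (hg s) (by linarith), ENNReal.ofReal_mul (exp_pos _).le]
  calc (∫⁻ s in Ioc t T, ENNReal.ofReal (g s) ∂A.measure) ^ p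
      ≤ (∫⁻ s in Ioc t T, ENNReal.ofReal (exp (β * A s)) * ENNReal.ofReal (g s) ^ p
            ∂A.measure) *
          (∫⁻ s in Ioc t T, ENNReal.ofReal (exp (-(β * A s / (p - 1)))) ∂A.measure) ^
            (p - 1) :=
        lintegral_rpow_le_lintegral_exp_mul_rpow _ hp (by fun_prop) (by fun_prop)
    _ ≤ _ := by
        simp only [hgp]
        rw [mul_comm (ENNReal.ofReal _)]
        gcongr
end

section
/- Let (Ω, ℱ, ℙ) be a probability space, S : Ω → ℝ a random variable, and let F be the cumulative distribution function of the law of S. If F is continuous, then ∫_Ω (1 − F(S(ω)))^{−1} ℙ(dω) = +∞ (as an integral with values in [0,∞]). -/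
open MeasureTheory ProbabilityTheory
open scoped ENNReal

open Set Filter in
private lemma cdf_surj_aux (μ : Measure ℝ) (hcont : Continuous (cdf μ)) (c : ℝ) (hc0 : 0 < c)
    (hc1 : c < 1) :
    ∃ x, cdf μ x = c := by
  obtain ⟨a, ha⟩ := ((tendsto_cdf_atBot μ).eventually_lt_const hc0).exists
  obtain ⟨b, hb⟩ := ((tendsto_cdf_atTop μ).eventually_const_lt hc1).exists
  have hab : a ≤ b := by
    by_contra h
    have h1 : cdf μ b ≤ cdf μ a := monotone_cdf μ (le_of_not_ge h)
    linarith
  have := intermediate_value_Icc hab hcont.continuousOn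
  obtain ⟨x, -, hx⟩ := this ⟨ha.le, hb.le⟩
  exact ⟨x, hx⟩

/-- If `S` is a real random variable on a probability space whose cumulative
distribution function `F = cdf (law of S)` is continuous, then
`∫ (1 - F(S))⁻¹ dP = +∞` (as an integral with values in `[0,∞]`). -/
theorem lintegral_inv_one_sub_cdf_eq_top {Ω : Type*} [MeasurableSpace Ω]
    (P : Measure Ω) [IsProbabilityMeasure P] (S : Ω → ℝ) (hS : Measurable S)
    (hF : Continuous (cdf (Measure.map S P))) :
    ∫⁻ ω, ENNReal.ofReal ((1 - cdf (Measure.map S P) (S ω))⁻¹) ∂P = ⊤ := by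
  set μ := Measure.map S P with hμ
  have : IsProbabilityMeasure μ := Measure.isProbabilityMeasure_map hS.aemeasurable
  set F := cdf μ with hFdef
  have hgm : Measurable fun x : ℝ => ENNReal.ofReal ((1 - F x)⁻¹) :=
    ENNReal.measurable_ofReal.comp ((measurable_const.sub hF.measurable).inv)
  rw [← lintegral_map hgm hS]
  -- choose points t k with F (t k) = 1 - (1/2)^(k+1)
  have hex : ∀ k : ℕ, ∃ x, F x = 1 - (1/2 : ℝ)^(k+1) := by
    intro k
    have h1 : (1/2:ℝ)^(k+1) < 1 := pow_lt_one₀ (by norm_num) (by norm_num) (by omega)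
    have h2 : (0:ℝ) < (1/2:ℝ)^(k+1) := by positivity
    exact cdf_surj_aux μ hF _ (by linarith) (by linarith)
  choose t ht using hex
  have htm : StrictMono t := by
    refine strictMono_nat_of_lt_succ fun k => ?_
    by_contra h
    have h1 : F (t (k+1)) ≤ F (t k) := monotone_cdf μ (le_of_not_gt h)
    rw [ht, ht] at h1
    have h2 : (1/2:ℝ)^(k+2) < (1/2:ℝ)^(k+1) :=
      pow_lt_pow_right_of_lt_one₀ (by norm_num) (by norm_num) (by omega)
    linarith
  set A : ℕ → Set ℝ := fun k => Set.Ioc (t k) (t (k+1)) with hA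
  have hAm : ∀ k, MeasurableSet (A k) := fun k => measurableSet_Ioc
  have hdisj : Pairwise (Function.onFun Disjoint A) := by
    intro i j hij
    rcases hij.lt_or_gt with h | h
    · exact Set.Ioc_disjoint_Ioc.2 (le_trans (min_le_left _ _)
        ((htm.monotone (by omega : i + 1 ≤ j)).trans (le_max_right _ _)))
    · exact Set.Ioc_disjoint_Ioc.2 (le_trans (min_le_right _ _)
        ((htm.monotone (by omega : j + 1 ≤ i)).trans (le_max_left _ _)))
  have hμA : ∀ k, μ (A k) = ENNReal.ofReal ((1/2:ℝ)^(k+2)) := by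
    intro k
    have : μ (A k) = F.measure (A k) := by rw [hFdef, measure_cdf]
    rw [this, hA, StieltjesFunction.measure_Ioc, ht, ht]
    congr 1
    ring
  have hband : ∀ k, (1/2 : ℝ≥0∞) ≤ ∫⁻ x in A k, ENNReal.ofReal ((1 - F x)⁻¹) ∂μ := by
    intro k
    have hge : ∀ x ∈ A k, ENNReal.ofReal ((2:ℝ)^(k+1)) ≤ ENNReal.ofReal ((1 - F x)⁻¹) := by
      intro x hx
      refine ENNReal.ofReal_le_ofReal ?_
      have h1 : F (t k) ≤ F x := monotone_cdf μ hx.1.le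
      have h2 : F x ≤ F (t (k+1)) := monotone_cdf μ hx.2
      rw [ht] at h1; rw [ht] at h2
      have hpos : (0:ℝ) < 1 - F x := by
        have : (0:ℝ) < (1/2:ℝ)^(k+2) := by positivity
        linarith
      have hx2 : 1 - F x ≤ ((2:ℝ)^(k+1))⁻¹ := by
        have : ((2:ℝ)^(k+1))⁻¹ = (1/2:ℝ)^(k+1) := by rw [← inv_pow]; norm_num
        rw [this]; linarith
      calc (2:ℝ)^(k+1) = (((2:ℝ)^(k+1))⁻¹)⁻¹ := by rw [inv_inv]
        _ ≤ (1 - F x)⁻¹ := inv_anti₀ hpos hx2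
    calc (1/2 : ℝ≥0∞) = ENNReal.ofReal ((2:ℝ)^(k+1)) * μ (A k) := by
          rw [hμA, ← ENNReal.ofReal_mul (by positivity)]
          rw [show (2:ℝ)^(k+1) * (1/2:ℝ)^(k+2) = 1/2 by
            rw [div_pow, one_pow]; field_simp; ring]
          rw [ENNReal.ofReal_div_of_pos (by norm_num)]
          norm_num
      _ = ∫⁻ _ in A k, ENNReal.ofReal ((2:ℝ)^(k+1)) ∂μ := by
          rw [setLIntegral_const]
      _ ≤ _ := setLIntegral_mono hgm hge
  have hsum : (⊤ : ℝ≥0∞) ≤ ∫⁻ x in ⋃ k, A k, ENNReal.ofReal ((1 - F x)⁻¹) ∂μ := by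
    rw [lintegral_iUnion hAm hdisj]
    calc (⊤ : ℝ≥0∞) = ∑' _ : ℕ, (1/2 : ℝ≥0∞) := by
          rw [ENNReal.tsum_const_eq_top_of_ne_zero (by norm_num)]
      _ ≤ _ := ENNReal.tsum_le_tsum hband
  exact top_le_iff.mp (hsum.trans (setLIntegral_le_lintegral _ _))
end

section
/- Let (Ω, ℱ, ℙ) be a probability space, S : Ω → ℝ a random variable with continuous cumulative distribution function F, and let T be a real number. If ∫_Ω (1 − F(min(S(ω), T)))^{−1} ℙ(dω) < ∞, then ℙ(S > T) > 0. -/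
/-!
If `P(S > T) = 0` then `min S T = S` almost surely, so the integral equals
`∫ (1 - F)⁻¹ d(law of S)`, which diverges for every continuous `F`: continuity provides points
`tₙ` with `F tₙ = 1 - 2⁻⁽ⁿ⁺¹⁾`, and on each slab `(tₙ, tₙ₊₁]`, of mass `2⁻⁽ⁿ⁺²⁾`, the integrand
is at least `2ⁿ⁺¹`, so every slab contributes at least `1/2`.
-/
open MeasureTheory ProbabilityTheory Set
open scoped ENNReal

namespace ProbabilityTheory

variable {μ : Measure ℝ}

lemma exists_cdf_eq (hF : Continuous (cdf μ)) {y : ℝ} (hy₀ : 0 < y) (hy₁ : y < 1) :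
    ∃ t, cdf μ t = y :=
  mem_range_of_exists_le_of_exists_ge hF
    ((tendsto_cdf_atBot μ).eventually_le_const hy₀).exists
    ((tendsto_cdf_atTop μ).eventually_const_le hy₁).exists

lemma ofReal_inv_one_sub_cdf_mul_le_setLIntegral {a b : ℝ} (hb : cdf μ b < 1) :
    ENNReal.ofReal ((1 - cdf μ a)⁻¹) * μ (Ioc a b) ≤
      ∫⁻ x in Ioc a b, ENNReal.ofReal ((1 - cdf μ x)⁻¹) ∂μ := by
  rw [← setLIntegral_const]
  refine setLIntegral_mono' measurableSet_Ioc fun x hx ↦ ENNReal.ofReal_le_ofReal ?_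
  have hxb : cdf μ x < 1 := (monotone_cdf μ hx.2).trans_lt hb
  exact inv_anti₀ (sub_pos.2 hxb) (sub_le_sub_left (monotone_cdf μ hx.1.le) 1)

variable [IsProbabilityMeasure μ]

lemma measure_Ioc_eq_ofReal_cdf_sub (a b : ℝ) :
    μ (Ioc a b) = ENNReal.ofReal (cdf μ b - cdf μ a) := by
  rw [← StieltjesFunction.measure_Ioc, measure_cdf]

theorem lintegral_ofReal_inv_one_sub_cdf_eq_top (hF : Continuous (cdf μ)) :
    ∫⁻ x, ENNReal.ofReal ((1 - cdf μ x)⁻¹) ∂μ = ∞ := by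
  have hpow_pos (n : ℕ) : (0 : ℝ) < 2⁻¹ ^ (n + 1) := by positivity
  have hpow_lt_one (n : ℕ) : (2⁻¹ : ℝ) ^ (n + 1) < 1 :=
    pow_lt_one₀ (by norm_num) (by norm_num) n.succ_ne_zero
  choose t ht using fun n : ℕ ↦
    exists_cdf_eq hF (sub_pos.2 (hpow_lt_one n)) (sub_lt_self 1 (hpow_pos n))
  have ht_mono : Monotone t := monotone_nat_of_le_succ fun n ↦ by
    refine ((monotone_cdf μ).reflect_lt ?_).le
    rw [ht, ht]
    exact sub_lt_sub_left (pow_lt_pow_right_of_lt_one₀ (by norm_num) (by norm_num) (by omega)) 1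
  have hpiece (n : ℕ) :
      ENNReal.ofReal 2⁻¹ ≤ ∫⁻ x in Ioc (t n) (t (n + 1)), ENNReal.ofReal ((1 - cdf μ x)⁻¹) ∂μ :=
    calc ENNReal.ofReal 2⁻¹
        = ENNReal.ofReal ((1 - cdf μ (t n))⁻¹) * μ (Ioc (t n) (t (n + 1))) := by
          rw [measure_Ioc_eq_ofReal_cdf_sub, ht, ht, ← ENNReal.ofReal_mul (by simp)]
          congr 1
          field_simp
          ring
      _ ≤ _ := ofReal_inv_one_sub_cdf_mul_le_setLIntegral
          (by rw [ht]; exact sub_lt_self 1 (hpow_pos _))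
  refine eq_top_iff.2 ?_
  calc ∞ = ∑' _ : ℕ, ENNReal.ofReal 2⁻¹ := (ENNReal.tsum_const_eq_top_of_ne_zero (by simp)).symm
    _ ≤ ∑' n, ∫⁻ x in Ioc (t n) (t (n + 1)), ENNReal.ofReal ((1 - cdf μ x)⁻¹) ∂μ :=
      ENNReal.tsum_le_tsum hpiece
    _ = ∫⁻ x in ⋃ n, Ioc (t n) (t (n + 1)), ENNReal.ofReal ((1 - cdf μ x)⁻¹) ∂μ :=
      (lintegral_iUnion (fun _ ↦ measurableSet_Ioc) ht_mono.pairwise_disjoint_on_Ioc_succ _).symm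
    _ ≤ _ := setLIntegral_le_lintegral _ _

end ProbabilityTheory

/-- Single-jump case of Lemma 4.3: if `S` is a real random variable with continuous
cumulative distribution function `F = cdf (law of S)` and
`∫ (1 - F(min(S,T)))⁻¹ dP < ∞`, then `P(S > T) > 0`. -/
theorem pos_prob_of_finite_exp_moment {Ω : Type*} [MeasurableSpace Ω]
    (P : Measure Ω) [IsProbabilityMeasure P] (S : Ω → ℝ) (hS : Measurable S)
    (hF : Continuous (cdf (Measure.map S P))) (T : ℝ)
    (hint : ∫⁻ ω, ENNReal.ofReal ((1 - cdf (Measure.map S P) (min (S ω) T))⁻¹) ∂P < ⊤) :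
    0 < P {ω | T < S ω} := by
  have : IsProbabilityMeasure (P.map S) := Measure.isProbabilityMeasure_map hS.aemeasurable
  refine pos_iff_ne_zero.2 fun hnull ↦ hint.ne ?_
  have hmin : ∀ᵐ ω ∂P, min (S ω) T = S ω := by
    filter_upwards [measure_eq_zero_iff_ae_notMem.1 hnull] with ω hω
    exact min_eq_left (not_lt.1 hω)
  have hg : Measurable fun x ↦ ENNReal.ofReal ((1 - cdf (P.map S) x)⁻¹) := by fun_prop
  rw [lintegral_congr_ae (hmin.mono fun ω hω ↦ by rw [hω]), ← lintegral_map hg hS,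
    lintegral_ofReal_inv_one_sub_cdf_eq_top hF]
end

section
/- Let α be a measurable space and ρ a probability measure on α × ℝ, with first marginal ρ.fst, and let condCDF ρ a denote the conditional cumulative distribution function of the second coordinate given the first. If for ρ.fst-almost every a ∈ α the function t ↦ condCDF ρ a t is continuous, then the pushforward of ρ under the map (a, t) ↦ (a, condCDF ρ a t) equals the product measure of ρ.fst with Lebesgue measure restricted to [0,1]. -/
/-!
Disintegrate `ρ = ρ.fst ⊗ₘ κ`, where `κ a` is the law on `ℝ` with distribution function
`F_a := condCDF ρ a`. The map `(a, t) ↦ (a, F_a t)` acts fibrewise, sending `κ a` to its image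
under its own distribution function. When `F_a` is continuous that image is uniform on `[0, 1]`:
for `0 < y < 1` the set `{F_a ≤ y}` is a half-line `Iic c` with `F_a c = y` by the intermediate
value theorem. A composition product whose fibres all have the same image is a product measure.
-/

open MeasureTheory ProbabilityTheory Set Filter

open scoped Topology

lemma Monotone.exists_preimage_Iic_eq_Iic {f : ℝ → ℝ} (hmono : Monotone f) (hf : Continuous f)
    {y : ℝ} (h_le : ∃ t, f t ≤ y) (h_lt : ∃ t, y < f t) :
    ∃ c, f c = y ∧ f ⁻¹' Iic y = Iic c := by
  obtain ⟨t₀, ht₀⟩ := h_lt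
  have h_ub : t₀ ∈ upperBounds (f ⁻¹' Iic y) := fun s hs =>
    le_of_not_gt fun hlt => (ht₀.trans_le (hmono hlt.le)).not_ge hs
  have h_mem : sSup (f ⁻¹' Iic y) ∈ f ⁻¹' Iic y :=
    (isClosed_le hf continuous_const).csSup_mem h_le ⟨t₀, h_ub⟩
  set c := sSup (f ⁻¹' Iic y)
  have h_eq : f ⁻¹' Iic y = Iic c :=
    Subset.antisymm (fun s hs => le_csSup ⟨t₀, h_ub⟩ hs) fun s hs => (hmono hs).trans h_mem
  have hct₀ : c ≤ t₀ := csSup_le h_le h_ub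
  obtain ⟨d, ⟨hcd, -⟩, hd⟩ :=
    intermediate_value_Icc hct₀ hf.continuousOn ⟨h_mem, ht₀.le⟩
  have hdc : d ≤ c := le_csSup ⟨t₀, h_ub⟩ (show d ∈ f ⁻¹' Iic y from hd.le)
  exact ⟨c, le_antisymm hdc hcd ▸ hd, h_eq⟩

lemma Real.volume_restrict_Icc_zero_one_Iic (y : ℝ) :
    volume.restrict (Icc (0 : ℝ) 1) (Iic y) = ENNReal.ofReal (min y 1) := by
  have h_inter : Iic y ∩ Icc 0 1 = Icc 0 (min y 1) := by
    ext t
    simp only [mem_inter_iff, mem_Iic, mem_Icc, le_min_iff]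
    tauto
  rw [Measure.restrict_apply measurableSet_Iic, h_inter, Real.volume_Icc, sub_zero]

lemma StieltjesFunction.map_measure_of_continuous (F : StieltjesFunction ℝ) (hF : Continuous F)
    (h_bot : Tendsto F atBot (𝓝 0)) (h_top : Tendsto F atTop (𝓝 1)) :
    F.measure.map F = volume.restrict (Icc 0 1) := by
  have := F.isProbabilityMeasure h_bot h_top
  refine Measure.ext_of_Iic _ _ fun y => ?_
  rw [Measure.map_apply F.mono.measurable measurableSet_Iic,
    Real.volume_restrict_Icc_zero_one_Iic]
  by_cases h_le : ∃ t, F t ≤ y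
  · by_cases h_lt : ∃ t, y < F t
    · obtain ⟨c, rfl, h_eq⟩ := F.mono.exists_preimage_Iic_eq_Iic hF h_le h_lt
      rw [h_eq, F.measure_Iic h_bot, sub_zero, min_eq_left (F.mono.ge_of_tendsto h_top c)]
    · push Not at h_lt
      have h_univ : F ⁻¹' Iic y = univ := eq_univ_of_forall h_lt
      rw [h_univ, MeasureTheory.measure_univ, min_eq_right (le_of_tendsto' h_top h_lt),
        ENNReal.ofReal_one]
  · push Not at h_le
    have h_empty : F ⁻¹' Iic y = ∅ := eq_empty_of_forall_notMem fun t ht => (h_le t).not_ge ht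
    rw [h_empty, measure_empty, eq_comm, ENNReal.ofReal_eq_zero]
    exact (min_le_left _ _).trans (ge_of_tendsto' h_bot fun t => (h_le t).le)

lemma MeasureTheory.Measure.map_compProd_eq_prod {α β γ : Type*} [MeasurableSpace α]
    [MeasurableSpace β] [MeasurableSpace γ] {μ : Measure α} [SFinite μ] {κ : Kernel α β}
    [IsSFiniteKernel κ] {g : α × β → γ} (hg : Measurable g) {ν : Measure γ} [SFinite ν]
    (h : ∀ᵐ a ∂μ, (κ a).map (fun b => g (a, b)) = ν) :
    (μ ⊗ₘ κ).map (fun p => (p.1, g p)) = μ.prod ν := by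
  ext s hs
  have h_meas : Measurable fun p : α × β => (p.1, g p) := measurable_fst.prodMk hg
  rw [Measure.map_apply h_meas hs, Measure.compProd_apply (h_meas hs), Measure.prod_apply hs]
  refine lintegral_congr_ae ?_
  filter_upwards [h] with a ha
  rw [← ha, Measure.map_apply (by fun_prop) (measurable_prodMk_left hs)]
  rfl

namespace ProbabilityTheory

variable {α : Type*} [MeasurableSpace α]

noncomputable def condCDFKernel (ρ : Measure (α × ℝ)) : Kernel α ℝ :=
  ⟨fun a => (condCDF ρ a).measure, measurable_measure_condCDF ρ⟩

lemma condCDFKernel_apply (ρ : Measure (α × ℝ)) (a : α) :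
    condCDFKernel ρ a = (condCDF ρ a).measure := rfl

instance (ρ : Measure (α × ℝ)) : IsMarkovKernel (condCDFKernel ρ) :=
  ⟨fun a => by rw [condCDFKernel_apply]; infer_instance⟩

lemma fst_compProd_condCDFKernel (ρ : Measure (α × ℝ)) [IsFiniteMeasure ρ] :
    ρ.fst ⊗ₘ condCDFKernel ρ = ρ := by
  ext s hs
  rw [Measure.compProd_apply hs]
  exact lintegral_toKernel_mem (isCondKernelCDF_condCDF ρ) () hs

lemma measurable_condCDF_uncurry (ρ : Measure (α × ℝ)) :
    Measurable fun p : α × ℝ => condCDF ρ p.1 p.2 := by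
  -- `Iic p.2` is the section at `p` of the measurable set `{q | q.2 ≤ q.1.2}`.
  have h_Iic : Measurable fun p : α × ℝ => condCDFKernel ρ p.1 (Iic p.2) :=
    Kernel.measurable_kernel_prodMk_left (κ := (condCDFKernel ρ).comap Prod.fst measurable_fst)
      (t := {q | q.2 ≤ q.1.2}) (measurableSet_le measurable_snd (by fun_prop))
  simp_rw [condCDFKernel_apply, measure_condCDF_Iic] at h_Iic
  simpa only [ENNReal.toReal_ofReal (condCDF_nonneg _ _ _)] using h_Iic.ennreal_toReal

end ProbabilityTheory

/-- Conditional probability integral transform: if `ρ` is a probability measure on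
`α × ℝ` such that for `ρ.fst`-almost every `a` the conditional cumulative distribution
function `condCDF ρ a` is continuous, then the pushforward of `ρ` under
`(a, t) ↦ (a, condCDF ρ a t)` is the product of `ρ.fst` with Lebesgue measure
restricted to `[0,1]`. -/
theorem conditional_probability_integral_transform {α : Type*} [MeasurableSpace α]
    (ρ : Measure (α × ℝ)) [IsProbabilityMeasure ρ]
    (hcont : ∀ᵐ a ∂ρ.fst, Continuous (condCDF ρ a)) :
    Measure.map (fun q : α × ℝ => (q.1, condCDF ρ q.1 q.2)) ρ
      = ρ.fst.prod (volume.restrict (Set.Icc (0 : ℝ) 1)) := by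
  have h_fiber : ∀ᵐ a ∂ρ.fst,
      (condCDFKernel ρ a).map (condCDF ρ a) = volume.restrict (Icc 0 1) :=
    hcont.mono fun a ha =>
      (condCDF ρ a).map_measure_of_continuous ha (tendsto_condCDF_atBot ρ a)
        (tendsto_condCDF_atTop ρ a)
  have h := Measure.map_compProd_eq_prod (measurable_condCDF_uncurry ρ) h_fiber
  rwa [fst_compProd_condCDFKernel] at h
end
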